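/- Lemma 2.1 (distance of the caloric extension to the target): let N ⊂ ℝ^l be a compact set. For every δ > 0 there exists K = K(δ, N) > 0 such that for every 0 < R ≤ ∞ and every measurable u₀ : ℝⁿ → N with [u₀]_{BMO_R(ℝⁿ)} < ∞, the caloric extension ũ₀ satisfies dist(ũ₀(x,t), N) ≤ K [u₀]_{BMO_R(ℝⁿ)} + δ for all x ∈ ℝⁿ and all 0 < t ≤ R²/K². In particular, if u₀ ∈ BMO(ℝⁿ) then dist(ũ₀(x,t), N) ≤ K [u₀]_{BMO(ℝⁿ)} + δ for all (x,t) ∈ ℝⁿ × (0,∞). -/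

import Mathlib

open MeasureTheory Metric Set
open scoped ENNReal

noncomputable section

abbrev Rn (n : ℕ) : Type := EuclideanSpace ℝ (Fin n)

/-- The heat kernel `G(x,t) = (4πt)^{-n/2} e^{-|x|²/(4t)}` on `ℝⁿ`. -/
def heatKernel (n : ℕ) (x : Rn n) (t : ℝ) : ℝ :=
  (4 * Real.pi * t) ^ (-(n : ℝ) / 2) * Real.exp (-‖x‖ ^ 2 / (4 * t))

/-- Caloric extension `ũ₀(x,t) = ∫ G(x-y,t) u₀(y) dy` (componentwise). -/
def caloricExt {n : ℕ} {F : Type*} [NormedAddCommGroup F] [NormedSpace ℝ F]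
    (u₀ : Rn n → F) (x : Rn n) (t : ℝ) : F :=
  ∫ y, heatKernel n (x - y) t • u₀ y

/-- Average of `f` over the ball `B_r(x)`. -/
def ballAvg {n : ℕ} {F : Type*} [NormedAddCommGroup F] [NormedSpace ℝ F]
    (f : Rn n → F) (x : Rn n) (r : ℝ) : F :=
  ⨍ y in ball x r, f y

/-- The set of numbers `r^{-n} ∫_{B_r(x)} |f - f_{x,r}|`, for `x ∈ ℝⁿ` and `0 < r ≤ R`. -/
def bmoSet {n : ℕ} {F : Type*} [NormedAddCommGroup F] [NormedSpace ℝ F]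
    (f : Rn n → F) (R : ℝ≥0∞) : Set ℝ :=
  {a | ∃ x r, 0 < r ∧ ENNReal.ofReal r ≤ R ∧
    a = (r ^ n)⁻¹ * ∫ y in ball x r, ‖f y - ballAvg f x r‖}

/-- The BMO_R seminorm `[f]_{BMO_R}`. -/
def bmoSeminorm {n : ℕ} {F : Type*} [NormedAddCommGroup F] [NormedSpace ℝ F]
    (f : Rn n → F) (R : ℝ≥0∞) : ℝ :=
  sSup (bmoSet f R)

/-- Spatial partial derivative in direction `e_i` of a time-dependent map. -/
def spd {n : ℕ} {F : Type*} [NormedAddCommGroup F] [NormedSpace ℝ F]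
    (u : Rn n → ℝ → F) (x : Rn n) (t : ℝ) (i : Fin n) : F :=
  fderiv ℝ (fun z => u z t) x (EuclideanSpace.single i 1)

/-- Carleson set of the gradient: numbers `r^{-n} ∫_{P_r(x,r²)} |∇u|²` for `0 < r ≤ R`. -/
def gradCarlesonSet {n : ℕ} {F : Type*} [NormedAddCommGroup F] [NormedSpace ℝ F]
    (u : Rn n → ℝ → F) (R : ℝ≥0∞) : Set ℝ :=
  {a | ∃ x r, 0 < r ∧ ENNReal.ofReal r ≤ R ∧
    a = (r ^ n)⁻¹ * ∫ t in Ioc (0:ℝ) (r ^ 2), ∫ y in ball x r,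
      ‖fderiv ℝ (fun z => u z t) y‖ ^ 2}

/-- Duhamel operator `𝕊f(x,t) = ∫_0^t ∫ G(x-y,t-s) f(y,s) dy ds`. -/
def duhamel {n : ℕ} {F : Type*} [NormedAddCommGroup F] [NormedSpace ℝ F]
    (f : Rn n → ℝ → F) (x : Rn n) (t : ℝ) : F :=
  ∫ s in Ioc (0:ℝ) t, ∫ y, heatKernel n (x - y) (t - s) • f y s

/-! Constituent sets for the norms of the spaces `X_T`, `Y_T`, `Z_T` (with `T ∈ (0,∞]`). -/

def xSet1 {n : ℕ} {F : Type*} [NormedAddCommGroup F] [NormedSpace ℝ F]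
    (f : Rn n → ℝ → F) (T : ℝ≥0∞) : Set ℝ :=
  {a | ∃ x t, 0 < t ∧ ENNReal.ofReal t ≤ T ∧ a = ‖f x t‖}

def xSet2 {n : ℕ} {F : Type*} [NormedAddCommGroup F] [NormedSpace ℝ F]
    (f : Rn n → ℝ → F) (T : ℝ≥0∞) : Set ℝ :=
  {a | ∃ x t, 0 < t ∧ ENNReal.ofReal t ≤ T ∧
    a = Real.sqrt t * ‖fderiv ℝ (fun z => f z t) x‖}

def xSet3 {n : ℕ} {F : Type*} [NormedAddCommGroup F] [NormedSpace ℝ F]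
    (f : Rn n → ℝ → F) (T : ℝ≥0∞) : Set ℝ :=
  {a | ∃ x r, 0 < r ∧ ENNReal.ofReal (r ^ 2) ≤ T ∧
    a = (r ^ n)⁻¹ * ∫ t in Ioc (0:ℝ) (r ^ 2), ∫ y in ball x r,
      ‖fderiv ℝ (fun z => f z t) y‖ ^ 2}

/-- Membership in `X_T`. -/
def MemX {n : ℕ} {F : Type*} [NormedAddCommGroup F] [NormedSpace ℝ F]
    (f : Rn n → ℝ → F) (T : ℝ≥0∞) : Prop :=
  BddAbove (xSet1 f T) ∧ BddAbove (xSet2 f T) ∧ BddAbove (xSet3 f T)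

/-- `‖f‖_{X_T}`. -/
def xNorm {n : ℕ} {F : Type*} [NormedAddCommGroup F] [NormedSpace ℝ F]
    (f : Rn n → ℝ → F) (T : ℝ≥0∞) : ℝ :=
  sSup (xSet2 f T) + Real.sqrt (sSup (xSet3 f T))

/-- `|||f|||_{X_T}`. -/
def xNormFull {n : ℕ} {F : Type*} [NormedAddCommGroup F] [NormedSpace ℝ F]
    (f : Rn n → ℝ → F) (T : ℝ≥0∞) : ℝ :=
  sSup (xSet1 f T) + xNorm f T

def ySet1 {n : ℕ} {F : Type*} [NormedAddCommGroup F] [NormedSpace ℝ F]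
    (f : Rn n → ℝ → F) (T : ℝ≥0∞) : Set ℝ :=
  {a | ∃ x t, 0 < t ∧ ENNReal.ofReal t ≤ T ∧ a = t * ‖f x t‖}

def ySet2 {n : ℕ} {F : Type*} [NormedAddCommGroup F] [NormedSpace ℝ F]
    (f : Rn n → ℝ → F) (T : ℝ≥0∞) : Set ℝ :=
  {a | ∃ x r, 0 < r ∧ ENNReal.ofReal (r ^ 2) ≤ T ∧
    a = (r ^ n)⁻¹ * ∫ t in Ioc (0:ℝ) (r ^ 2), ∫ y in ball x r, ‖f y t‖}

/-- Membership in `Y_T`. -/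
def MemY {n : ℕ} {F : Type*} [NormedAddCommGroup F] [NormedSpace ℝ F]
    (f : Rn n → ℝ → F) (T : ℝ≥0∞) : Prop :=
  BddAbove (ySet1 f T) ∧ BddAbove (ySet2 f T)

/-- `‖f‖_{Y_T}`. -/
def yNorm {n : ℕ} {F : Type*} [NormedAddCommGroup F] [NormedSpace ℝ F]
    (f : Rn n → ℝ → F) (T : ℝ≥0∞) : ℝ :=
  sSup (ySet1 f T) + sSup (ySet2 f T)

def zSet1 {n : ℕ} {F : Type*} [NormedAddCommGroup F] [NormedSpace ℝ F]
    (f : Rn n → ℝ → F) (T : ℝ≥0∞) : Set ℝ :=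
  {a | ∃ x t, 0 < t ∧ ENNReal.ofReal t ≤ T ∧ a = Real.sqrt t * ‖f x t‖}

def zSet2 {n : ℕ} {F : Type*} [NormedAddCommGroup F] [NormedSpace ℝ F]
    (f : Rn n → ℝ → F) (T : ℝ≥0∞) : Set ℝ :=
  {a | ∃ x r, 0 < r ∧ ENNReal.ofReal (r ^ 2) ≤ T ∧
    a = (r ^ n)⁻¹ * ∫ t in Ioc (0:ℝ) (r ^ 2), ∫ y in ball x r, ‖f y t‖ ^ 2}

/-- Membership in `Z_T`. -/
def MemZ {n : ℕ} {F : Type*} [NormedAddCommGroup F] [NormedSpace ℝ F]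
    (f : Rn n → ℝ → F) (T : ℝ≥0∞) : Prop :=
  BddAbove (zSet1 f T) ∧ BddAbove (zSet2 f T)

/-- `‖f‖_{Z_T}`. -/
def zNorm {n : ℕ} {F : Type*} [NormedAddCommGroup F] [NormedSpace ℝ F]
    (f : Rn n → ℝ → F) (T : ℝ≥0∞) : ℝ :=
  sSup (zSet1 f T) + Real.sqrt (sSup (zSet2 f T))

end

/-! Compare `ũ₀(x,t)` with the average `c` of `u₀` over `B_r(x)`, `r = a√t`. As `u₀` takes values
in `N`, `dist(c, N) ≤ ⨍_{B_r(x)} |u₀ - c| ≲ [u₀]_{BMO_R}`. On `B_r(x)` the heat kernel is at most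
`(4πt)^{-n/2} ≈ r^{-n}`, so that part of `∫ G(x-y,t) |u₀(y) - c| dy` is again `≲ [u₀]_{BMO_R}`; off
the ball `|u₀ - c| ≤ 2 sup_N |·|` and the Gaussian tail is `≲ e^{-a²/8}`, which is below `δ` for `a`
large. Taking `K ≥ a` guarantees `r ≤ R` whenever `K²t ≤ R²`. -/
open Filter Real Topology

section HeatKernel

variable {n : ℕ} {t : ℝ}

lemma heatKernel_eq_mul_exp (z : Rn n) (t : ℝ) :
    heatKernel n z t = (4 * π * t) ^ (-(n : ℝ) / 2) * exp (-(4 * t)⁻¹ * ‖z‖ ^ 2) := by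
  rw [heatKernel]; ring_nf

lemma heatKernel_nonneg (z : Rn n) (ht : 0 ≤ t) : 0 ≤ heatKernel n z t := by
  rw [heatKernel]; positivity

lemma heatKernel_le (z : Rn n) (ht : 0 ≤ t) :
    heatKernel n z t ≤ (4 * π * t) ^ (-(n : ℝ) / 2) := by
  rw [heatKernel_eq_mul_exp]
  refine mul_le_of_le_one_right (by positivity) (exp_le_one_iff.2 ?_)
  have : 0 ≤ (4 * t)⁻¹ * ‖z‖ ^ 2 := by positivity
  linarith

lemma integral_heatKernel (ht : 0 < t) : ∫ z : Rn n, heatKernel n z t = 1 := by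
  simp_rw [heatKernel_eq_mul_exp]
  rw [integral_const_mul, GaussianFourier.integral_rexp_neg_mul_sq_norm (by positivity),
    finrank_euclideanSpace_fin, div_inv_eq_mul, show π * (4 * t) = 4 * π * t by ring,
    ← rpow_add (by positivity), show -(n : ℝ) / 2 + n / 2 = 0 by ring, rpow_zero]

lemma integrable_heatKernel (ht : 0 < t) : Integrable fun z : Rn n ↦ heatKernel n z t :=
  .of_integral_ne_zero (by rw [integral_heatKernel ht]; exact one_ne_zero)

lemma heatKernel_le_of_le_norm {z : Rn n} {r : ℝ} (ht : 0 < t) (hr : 0 ≤ r) (hrz : r ≤ ‖z‖) :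
    heatKernel n z t ≤ 2 ^ ((n : ℝ) / 2) * exp (-r ^ 2 / (8 * t)) * heatKernel n z (2 * t) := by
  have hscale : 2 ^ ((n : ℝ) / 2) * (4 * π * (2 * t)) ^ (-(n : ℝ) / 2)
      = (4 * π * t) ^ (-(n : ℝ) / 2) := by
    rw [show 4 * π * (2 * t) = 2 * (4 * π * t) by ring, mul_rpow (by norm_num) (by positivity),
      ← mul_assoc, ← rpow_add two_pos, show (n : ℝ) / 2 + -n / 2 = 0 by ring, rpow_zero, one_mul]
  have hsplit : exp (-‖z‖ ^ 2 / (4 * t)) = exp (-‖z‖ ^ 2 / (8 * t)) * exp (-‖z‖ ^ 2 / (8 * t)) := by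
    rw [← exp_add]; congr 1; field_simp; ring
  calc heatKernel n z t
      = (4 * π * t) ^ (-(n : ℝ) / 2) * (exp (-‖z‖ ^ 2 / (8 * t)) * exp (-‖z‖ ^ 2 / (8 * t))) := by
        rw [heatKernel, hsplit]
    _ ≤ (4 * π * t) ^ (-(n : ℝ) / 2) * (exp (-r ^ 2 / (8 * t)) * exp (-‖z‖ ^ 2 / (8 * t))) := by
        gcongr
    _ = 2 ^ ((n : ℝ) / 2) * exp (-r ^ 2 / (8 * t)) * heatKernel n z (2 * t) := by
        rw [heatKernel, ← hscale, show 4 * (2 * t) = 8 * t by ring]; ring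

end HeatKernel

section CaloricExt

variable {n : ℕ} {F : Type*} [NormedAddCommGroup F] [NormedSpace ℝ F] {t : ℝ}

lemma integrable_heatKernel_smul {f : Rn n → F} {B : ℝ} (hf : AEStronglyMeasurable f)
    (hB : ∀ y, ‖f y‖ ≤ B) (x : Rn n) (ht : 0 < t) :
    Integrable fun y ↦ heatKernel n (x - y) t • f y :=
  ((integrable_heatKernel ht).comp_sub_left x).smul_bdd B hf (ae_of_all _ hB)

lemma caloricExt_sub_const [CompleteSpace F] {f : Rn n → F} {B : ℝ}
    (hf : AEStronglyMeasurable f) (hB : ∀ y, ‖f y‖ ≤ B) (c : F) (x : Rn n) (ht : 0 < t) :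
    caloricExt (fun y ↦ f y - c) x t = caloricExt f x t - c := by
  simp_rw [caloricExt, smul_sub]
  rw [integral_sub (integrable_heatKernel_smul hf hB x ht)
      (((integrable_heatKernel ht).comp_sub_left x).smul_const c), integral_smul_const,
    integral_sub_left_eq_self (fun z ↦ heatKernel n z t), integral_heatKernel ht, one_smul]

lemma norm_caloricExt_le {f : Rn n → F} {B : ℝ} (hf : AEStronglyMeasurable f)
    (hB : ∀ y, ‖f y‖ ≤ B) (x : Rn n) (ht : 0 < t) {r : ℝ} (hr : 0 ≤ r) :
    ‖caloricExt f x t‖ ≤ (4 * π * t) ^ (-(n : ℝ) / 2) * (∫ y in ball x r, ‖f y‖)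
      + B * 2 ^ ((n : ℝ) / 2) * exp (-r ^ 2 / (8 * t)) := by
  set g : Rn n → ℝ := fun y ↦ heatKernel n (x - y) t * ‖f y‖
  have hg : Integrable g :=
    integrable_heatKernel_smul hf.norm (fun y ↦ (norm_norm (f y)).trans_le (hB y)) x ht
  have hnorm : ‖caloricExt f x t‖ ≤ ∫ y, g y := by
    refine (norm_integral_le_integral_norm _).trans_eq (integral_congr_ae (ae_of_all _ fun y ↦ ?_))
    simp [g, norm_smul, abs_of_nonneg (heatKernel_nonneg _ ht.le)]
  have hinside : ∫ y in ball x r, g y ≤ (4 * π * t) ^ (-(n : ℝ) / 2) * ∫ y in ball x r, ‖f y‖ := by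
    rw [← integral_const_mul]
    refine setIntegral_mono_on hg.integrableOn ?_ measurableSet_ball fun y _ ↦
      mul_le_mul_of_nonneg_right (heatKernel_le _ ht.le) (norm_nonneg _)
    exact (IntegrableOn.of_bound measure_ball_lt_top hf.norm.restrict B
      (ae_of_all _ fun y ↦ (norm_norm (f y)).trans_le (hB y))).const_mul _
  have houtside : ∫ y in (ball x r)ᶜ, g y ≤ B * 2 ^ ((n : ℝ) / 2) * exp (-r ^ 2 / (8 * t)) := by
    set C := B * 2 ^ ((n : ℝ) / 2) * exp (-r ^ 2 / (8 * t))
    have hB0 : 0 ≤ B := (norm_nonneg _).trans (hB 0)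
    have hG : Integrable fun y ↦ C * heatKernel n (x - y) (2 * t) :=
      ((integrable_heatKernel (by positivity)).comp_sub_left x).const_mul C
    calc ∫ y in (ball x r)ᶜ, g y
        ≤ ∫ y in (ball x r)ᶜ, C * heatKernel n (x - y) (2 * t) := by
          refine setIntegral_mono_on hg.integrableOn hG.integrableOn measurableSet_ball.compl
            fun y hy ↦ ?_
          have hry : r ≤ ‖x - y‖ := by simpa [dist_eq_norm, norm_sub_rev] using hy
          calc g y ≤ heatKernel n (x - y) t * B :=
                mul_le_mul_of_nonneg_left (hB y) (heatKernel_nonneg _ ht.le)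
            _ ≤ (2 ^ ((n : ℝ) / 2) * exp (-r ^ 2 / (8 * t)) * heatKernel n (x - y) (2 * t)) * B :=
                mul_le_mul_of_nonneg_right (heatKernel_le_of_le_norm ht hr hry) hB0
            _ = C * heatKernel n (x - y) (2 * t) := by ring
      _ ≤ ∫ y, C * heatKernel n (x - y) (2 * t) :=
          setIntegral_le_integral hG (ae_of_all _ fun y ↦
            mul_nonneg (by positivity) (heatKernel_nonneg _ (by positivity)))
      _ = C := by
          rw [integral_const_mul, integral_sub_left_eq_self (fun z ↦ heatKernel n z (2 * t)),
            integral_heatKernel (by positivity), mul_one]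
  calc ‖caloricExt f x t‖ ≤ ∫ y, g y := hnorm
    _ = (∫ y in ball x r, g y) + ∫ y in (ball x r)ᶜ, g y :=
        (integral_add_compl measurableSet_ball hg).symm
    _ ≤ _ := add_le_add hinside houtside

end CaloricExt

lemma infDist_mul_measureReal_le_setIntegral {α E : Type*} [MeasurableSpace α] {μ : Measure α}
    [NormedAddCommGroup E] {s : Set α} {u : α → E} {N : Set E} (c : E) (hs : MeasurableSet s)
    (hμs : μ s ≠ ∞) (hu : IntegrableOn (fun y ↦ ‖u y - c‖) s μ) (huN : ∀ y ∈ s, u y ∈ N) :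
    infDist c N * μ.real s ≤ ∫ y in s, ‖u y - c‖ ∂μ := by
  rw [mul_comm, ← smul_eq_mul, ← setIntegral_const]
  exact setIntegral_mono_on (integrableOn_const hμs) hu hs fun y hy ↦ by
    rw [← dist_eq_norm, dist_comm]; exact infDist_le_dist_of_mem (huN y hy)

section Ball

variable {n : ℕ} {F : Type*} [NormedAddCommGroup F] [NormedSpace ℝ F]

lemma measureReal_ball_eq (x : Rn n) {r : ℝ} (hr : 0 < r) :
    volume.real (ball x r) = r ^ n * volume.real (ball (0 : Rn n) 1) := by
  rw [measureReal_def, Measure.addHaar_ball_of_pos _ _ hr, ENNReal.toReal_mul,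
    ENNReal.toReal_ofReal (by positivity), finrank_euclideanSpace_fin, measureReal_def]

lemma norm_ballAvg_le [CompleteSpace F] {f : Rn n → F} {B : ℝ} (hf : AEStronglyMeasurable f)
    (hB : ∀ y, ‖f y‖ ≤ B) (x : Rn n) {r : ℝ} (hr : 0 < r) : ‖ballAvg f x r‖ ≤ B := by
  rw [← mem_closedBall_zero_iff]
  exact (convex_closedBall 0 B).set_average_mem isClosed_closedBall
    (measure_ball_pos _ x hr).ne' measure_ball_lt_top.ne
    (ae_of_all _ fun y ↦ mem_closedBall_zero_iff.2 (hB y))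
    (IntegrableOn.of_bound measure_ball_lt_top hf.restrict B (ae_of_all _ hB))

lemma bmoSeminorm_nonneg (f : Rn n → F) (R : ℝ≥0∞) : 0 ≤ bmoSeminorm f R :=
  Real.sSup_nonneg fun _ ⟨_, r, hr, _, h⟩ ↦ h ▸ mul_nonneg (by positivity)
    (integral_nonneg fun _ ↦ norm_nonneg _)

lemma integral_norm_sub_ballAvg_le {f : Rn n → F} {R : ℝ≥0∞} (hf : BddAbove (bmoSet f R))
    (x : Rn n) {r : ℝ} (hr : 0 < r) (hrR : ENNReal.ofReal r ≤ R) :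
    ∫ y in ball x r, ‖f y - ballAvg f x r‖ ≤ r ^ n * bmoSeminorm f R := by
  have := le_csSup hf ⟨x, r, hr, hrR, rfl⟩
  rwa [inv_mul_le_iff₀ (by positivity)] at this

end Ball

lemma infDist_caloricExt_le {n : ℕ} {F : Type*} [NormedAddCommGroup F] [NormedSpace ℝ F]
    [CompleteSpace F] {N : Set F} {M : ℝ} {u₀ : Rn n → F} (hu₀ : AEStronglyMeasurable u₀)
    (hu₀N : ∀ y, u₀ y ∈ N) (hM : ∀ y, ‖u₀ y‖ ≤ M) {R : ℝ≥0∞} (hbdd : BddAbove (bmoSet u₀ R))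
    (x : Rn n) {t r : ℝ} (ht : 0 < t) (hr : 0 < r) (hrR : ENNReal.ofReal r ≤ R) :
    infDist (caloricExt u₀ x t) N
      ≤ ((volume.real (ball (0 : Rn n) 1))⁻¹ + (4 * π * t) ^ (-(n : ℝ) / 2) * r ^ n)
          * bmoSeminorm u₀ R + 2 * M * 2 ^ ((n : ℝ) / 2) * exp (-r ^ 2 / (8 * t)) := by
  set c := ballAvg u₀ x r
  set ω := volume.real (ball (0 : Rn n) 1)
  have hω : 0 < ω := ENNReal.toReal_pos (measure_ball_pos _ _ one_pos).ne' measure_ball_lt_top.ne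
  have hdiff : AEStronglyMeasurable fun y ↦ u₀ y - c := hu₀.sub aestronglyMeasurable_const
  have hdiff_le : ∀ y, ‖u₀ y - c‖ ≤ 2 * M := fun y ↦
    (norm_sub_le _ _).trans (by linarith [hM y, norm_ballAvg_le hu₀ hM x hr])
  have hosc : ∫ y in ball x r, ‖u₀ y - c‖ ≤ r ^ n * bmoSeminorm u₀ R :=
    integral_norm_sub_ballAvg_le hbdd x hr hrR
  have hc : infDist c N ≤ ω⁻¹ * bmoSeminorm u₀ R := by
    have h := (infDist_mul_measureReal_le_setIntegral c measurableSet_ball measure_ball_lt_top.ne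
      (IntegrableOn.of_bound measure_ball_lt_top hdiff.norm.restrict (2 * M)
        (ae_of_all _ fun y ↦ (norm_norm _).trans_le (hdiff_le y)))
      fun y _ ↦ hu₀N y).trans hosc
    rw [measureReal_ball_eq x hr] at h
    rw [inv_mul_eq_div, le_div_iff₀ hω]
    nlinarith [pow_pos hr n]
  have hext : ‖caloricExt u₀ x t - c‖
      ≤ (4 * π * t) ^ (-(n : ℝ) / 2) * (r ^ n * bmoSeminorm u₀ R)
        + 2 * M * 2 ^ ((n : ℝ) / 2) * exp (-r ^ 2 / (8 * t)) := by
    rw [← caloricExt_sub_const hu₀ hM c x ht]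
    exact (norm_caloricExt_le hdiff hdiff_le x ht hr.le).trans (by gcongr)
  calc infDist (caloricExt u₀ x t) N ≤ infDist c N + dist (caloricExt u₀ x t) c :=
        infDist_le_infDist_add_dist
    _ ≤ ω⁻¹ * bmoSeminorm u₀ R + ((4 * π * t) ^ (-(n : ℝ) / 2) * (r ^ n * bmoSeminorm u₀ R)
        + 2 * M * 2 ^ ((n : ℝ) / 2) * exp (-r ^ 2 / (8 * t))) := by
        rw [dist_eq_norm]; exact add_le_add hc hext
    _ = _ := by ring

lemma exists_pos_mul_exp_neg_sq_div_le (C : ℝ) {δ : ℝ} (hδ : 0 < δ) :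
    ∃ a > 0, C * exp (-a ^ 2 / 8) ≤ δ := by
  have hlim : Tendsto (fun a : ℝ ↦ C * exp (-a ^ 2 / 8)) atTop (𝓝 0) := by
    simpa using (tendsto_exp_atBot.comp ((tendsto_neg_atTop_atBot.comp
      (tendsto_pow_atTop two_ne_zero)).atBot_div_const (by norm_num : (0 : ℝ) < 8))).const_mul C
  obtain ⟨a, hCa, ha⟩ := ((hlim.eventually (ge_mem_nhds hδ)).and (eventually_gt_atTop 0)).exists
  exact ⟨a, ha, hCa⟩

lemma infDist_caloricExt_le_of_parabolic {n : ℕ} {F : Type*} [NormedAddCommGroup F]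
    [NormedSpace ℝ F] [CompleteSpace F] {N : Set F} {M : ℝ} {u₀ : Rn n → F}
    (hu₀ : AEStronglyMeasurable u₀) (hu₀N : ∀ y, u₀ y ∈ N) (hM : ∀ y, ‖u₀ y‖ ≤ M) {R : ℝ≥0∞}
    (hbdd : BddAbove (bmoSet u₀ R)) (x : Rn n) {t a : ℝ} (ht : 0 < t) (ha : 0 < a)
    (haR : ENNReal.ofReal (a * √t) ≤ R) :
    infDist (caloricExt u₀ x t) N
      ≤ ((volume.real (ball (0 : Rn n) 1))⁻¹ + (4 * π) ^ (-(n : ℝ) / 2) * a ^ n)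
          * bmoSeminorm u₀ R + 2 * M * 2 ^ ((n : ℝ) / 2) * exp (-a ^ 2 / 8) := by
  have hcancel : t ^ (-(n : ℝ) / 2) * √t ^ n = 1 := by
    rw [sqrt_eq_rpow, ← rpow_natCast (t ^ (1 / 2 : ℝ)) n, ← rpow_mul ht.le, ← rpow_add ht,
      show -(n : ℝ) / 2 + 1 / 2 * n = 0 by ring, rpow_zero]
  have hscale :
      (4 * π * t) ^ (-(n : ℝ) / 2) * (a * √t) ^ n = (4 * π) ^ (-(n : ℝ) / 2) * a ^ n := by
    rw [mul_rpow (by positivity) ht.le, mul_pow]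
    linear_combination (4 * π) ^ (-(n : ℝ) / 2) * a ^ n * hcancel
  have hexp : -(a * √t) ^ 2 / (8 * t) = -a ^ 2 / 8 := by
    rw [mul_pow, sq_sqrt ht.le]; field_simp
  simpa only [hscale, hexp] using
    infDist_caloricExt_le hu₀ hu₀N hM hbdd x ht (by positivity : 0 < a * √t) haR

lemma ofReal_mul_sqrt_le {R : ℝ≥0∞} {a K t : ℝ} (ha : 0 ≤ a) (haK : a ≤ K) (ht : 0 ≤ t)
    (hKt : ENNReal.ofReal (K ^ 2 * t) ≤ R ^ 2) : ENNReal.ofReal (a * √t) ≤ R := by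
  rw [← ENNReal.pow_le_pow_left_iff two_ne_zero, ← ENNReal.ofReal_pow (by positivity), mul_pow,
    sq_sqrt ht]
  exact (ENNReal.ofReal_le_ofReal (by gcongr)).trans hKt

theorem statement5_general (n l : ℕ)
    (N : Set (Rn l)) (hN : IsCompact N) :
    ∀ δ : ℝ, 0 < δ → ∃ K : ℝ, 0 < K ∧
      ∀ R : ℝ≥0∞, 0 < R →
        ∀ u₀ : Rn n → Rn l, Measurable u₀ → (∀ x, u₀ x ∈ N) →
          BddAbove (bmoSet u₀ R) →
          (∀ x : Rn n, ∀ t : ℝ, 0 < t → ENNReal.ofReal (K ^ 2 * t) ≤ R ^ 2 →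
            Metric.infDist (caloricExt u₀ x t) N ≤ K * bmoSeminorm u₀ R + δ) ∧
          (R = ⊤ → ∀ x : Rn n, ∀ t : ℝ, 0 < t →
            Metric.infDist (caloricExt u₀ x t) N ≤ K * bmoSeminorm u₀ ⊤ + δ) := by
  intro δ hδ
  obtain ⟨M, hM⟩ := hN.isBounded.exists_norm_le
  obtain ⟨a, ha, htail⟩ := exists_pos_mul_exp_neg_sq_div_le (2 * M * 2 ^ ((n : ℝ) / 2)) hδ
  set K := max a ((volume.real (ball (0 : Rn n) 1))⁻¹ + (4 * π) ^ (-(n : ℝ) / 2) * a ^ n)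
  refine ⟨K, ha.trans_le (le_max_left _ _), fun R _ u₀ hu₀ hu₀N hbdd ↦ ?_⟩
  have key : ∀ x : Rn n, ∀ t : ℝ, 0 < t → ENNReal.ofReal (K ^ 2 * t) ≤ R ^ 2 →
      infDist (caloricExt u₀ x t) N ≤ K * bmoSeminorm u₀ R + δ := fun x t ht hKt ↦
    (infDist_caloricExt_le_of_parabolic hu₀.aestronglyMeasurable hu₀N (fun y ↦ hM _ (hu₀N y))
      hbdd x ht ha (ofReal_mul_sqrt_le ha.le (le_max_left _ _) ht.le hKt)).trans
      (add_le_add (mul_le_mul_of_nonneg_right (le_max_right _ _) (bmoSeminorm_nonneg _ _)) htail)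
  refine ⟨key, fun hR x t ht ↦ ?_⟩
  subst hR
  exact key x t ht (by simp)

/-- Lemma 2.1: distance of the caloric extension to the target set. -/
theorem statement5 (n l : ℕ) (hn : 1 ≤ n)
    (N : Set (Rn l)) (hN : IsCompact N) :
    ∀ δ : ℝ, 0 < δ → ∃ K : ℝ, 0 < K ∧
      ∀ R : ℝ≥0∞, 0 < R →
        ∀ u₀ : Rn n → Rn l, Measurable u₀ → (∀ x, u₀ x ∈ N) →
          BddAbove (bmoSet u₀ R) →
          (∀ x : Rn n, ∀ t : ℝ, 0 < t → ENNReal.ofReal (K ^ 2 * t) ≤ R ^ 2 →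
            Metric.infDist (caloricExt u₀ x t) N ≤ K * bmoSeminorm u₀ R + δ) ∧
          (R = ⊤ → ∀ x : Rn n, ∀ t : ℝ, 0 < t →
            Metric.infDist (caloricExt u₀ x t) N ≤ K * bmoSeminorm u₀ ⊤ + δ) :=
  statement5_general n l N hN
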